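/- Let q, r, k be positive integers, B = q(r-1)+k, and let X̂, Ŷ ∈ ℚ⟦z⟧ be as in the context. Then z·X̂'(z) = X̂(z)·(1 - (q(r-1)+k)·Ŷ(z)^{r-1}·X̂(z)^{r-1+k}) in ℚ⟦z⟧, where X̂' is the formal derivative; equivalently, z·X̂'(z)·(1+(k/r)·z^B) = X̂(z)·(1+((k/r)-B)·z^B). -/

import Mathlib

open Finset Nat PowerSeries

/-- The generalized binomial coefficient `binom(α, n) = α(α-1)⋯(α-n+1)/n!`. -/
noncomputable def qbinom (α : ℚ) (n : ℕ) : ℚ :=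
  (∏ i ∈ Finset.range n, (α - i)) / n !

/-- The formal binomial series `(1+u)^α = Σ_{n≥0} binom(α,n)·u^n`, for a power
series `u` with zero constant term. -/
noncomputable def binomPow (α : ℚ) (u : PowerSeries ℚ) : PowerSeries ℚ :=
  PowerSeries.mk fun d =>
    ∑ n ∈ Finset.range (d + 1), qbinom α n * PowerSeries.coeff (R := ℚ) d (u ^ n)

/-- The parametrisation `X̂(z) = z·(1+(k/r)·z^B)^{-r/k}`, where `B = q(r-1)+k`. -/
noncomputable def Xhat (q r k : ℕ) : PowerSeries ℚ :=
  PowerSeries.X *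
    binomPow (-(r : ℚ) / k)
      (PowerSeries.C (R := ℚ) ((k : ℚ) / r) * PowerSeries.X ^ (q * (r - 1) + k))

/-- The parametrisation `Ŷ(z) = z^{q-1}·(1+(k/r)·z^B)^{(r+k)/k}`, where `B = q(r-1)+k`. -/
noncomputable def Yhat (q r k : ℕ) : PowerSeries ℚ :=
  PowerSeries.X ^ (q - 1) *
    binomPow (((r : ℚ) + k) / k)
      (PowerSeries.C (R := ℚ) ((k : ℚ) / r) * PowerSeries.X ^ (q * (r - 1) + k))

/-! Put `u = (k/r)·z^B`. The binomial factors of `X̂` and `Ŷ` are the series `(1+t)^α` evaluated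
at `t = u`, so they multiply by adding exponents and satisfy `(1+u)·((1+u)^α)' = α·(1+u)^α·u'`.
Since `z·u' = B·u`, this gives `z·X̂'·(1+u) = X̂·(1 + u + αB·u)`, which for `α = -r/k` is the
second identity. In `Ŷ^{r-1}·X̂^{r-1+k}` the powers of `z` add up to `B` and those of `1+u` to
`(r-1)(r+k)/k - (r-1+k)r/k = -1`, so dividing the second identity by `1+u` gives the first. -/

namespace PowerSeries

section BinomialRing

variable {R : Type*} [CommRing R] [BinomialRing R]

theorem derivative_binomialSeries (r : R) :
    d⁄dX R (binomialSeries R r) = r • binomialSeries R (r - 1) := by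
  ext n
  have h := Ring.choose_smul_choose r (Nat.le_add_left 1 n)
  simp only [Nat.choose_one_right, Ring.choose_one_right, Nat.add_sub_cancel, Nat.cast_one] at h
  simp only [coeff_derivative, coeff_smul, binomialSeries_coeff, smul_eq_mul, mul_one, ← h,
    nsmul_eq_mul]
  push_cast
  ring

theorem one_add_X_mul_binomialSeries_sub_one (r : R) :
    (1 + X) * binomialSeries R (r - 1) = binomialSeries R r := by
  have h := binomialSeries_nat (A := R) (R := R) 1
  rw [Nat.cast_one, pow_one] at h
  rw [← h, ← binomialSeries_add, add_sub_cancel]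

end BinomialRing

theorem X_mul_derivative_C_mul_X_pow {R : Type*} [CommSemiring R] (c : R) (n : ℕ) :
    X * d⁄dX R (C c * X ^ n) = (n : R⟦X⟧) * (C c * X ^ n) := by
  rw [Derivation.leibniz, derivative_pow, derivative_X, derivative_C, smul_zero, add_zero,
    smul_eq_mul]
  cases n with
  | zero => simp
  | succ n => rw [Nat.add_sub_cancel, _root_.pow_succ']; ring

end PowerSeries

theorem qbinom_eq_choose (α : ℚ) (n : ℕ) : qbinom α n = Ring.choose α n := by
  rw [Ring.choose_eq_smul, ← Polynomial.aeval_eq_smeval, ← Polynomial.eval_map_algebraMap,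
    descPochhammer_map, descPochhammer_eval_eq_prod_range, qbinom, smul_eq_mul, div_eq_inv_mul]

theorem binomPow_eq_subst (α : ℚ) {u : ℚ⟦X⟧} (hu : constantCoeff u = 0) :
    binomPow α u = (PowerSeries.binomialSeries ℚ α).subst u := by
  ext d
  rw [coeff_subst' (HasSubst.of_constantCoeff_zero' hu), binomPow, coeff_mk,
    finsum_eq_sum_of_support_subset (s := Finset.range (d + 1))]
  · simp [qbinom_eq_choose]
  · intro n hn
    by_contra hnd
    have hdvd : X ^ n ∣ u ^ n := pow_dvd_pow_of_dvd (X_dvd_iff.mpr hu) n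
    exact hn (by simp [X_pow_dvd_iff.mp hdvd d (by simpa using hnd)])

section binomPow

variable {u : ℚ⟦X⟧} (hu : constantCoeff u = 0)
include hu

theorem binomPow_add (α β : ℚ) : binomPow (α + β) u = binomPow α u * binomPow β u := by
  rw [binomPow_eq_subst _ hu, binomPow_eq_subst _ hu, binomPow_eq_subst _ hu, binomialSeries_add,
    subst_mul (HasSubst.of_constantCoeff_zero' hu)]

theorem binomPow_natCast (n : ℕ) : binomPow n u = (1 + u) ^ n := by
  have hs := HasSubst.of_constantCoeff_zero' hu
  rw [binomPow_eq_subst _ hu, binomialSeries_nat, ← coe_substAlgHom hs, map_pow, map_add, map_one,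
    coe_substAlgHom hs, subst_X hs]

theorem binomPow_natCast_mul (n : ℕ) (α : ℚ) : binomPow (n * α) u = binomPow α u ^ n := by
  induction n with
  | zero => simpa using binomPow_natCast hu 0
  | succ n ih => rw [Nat.cast_succ, add_mul, one_mul, binomPow_add hu, ih, pow_succ]

theorem binomPow_neg_one_mul_one_add : binomPow (-1) u * (1 + u) = 1 := by
  have h1 := binomPow_natCast hu 1
  have h0 := binomPow_natCast hu 0
  rw [Nat.cast_one, pow_one] at h1
  rw [Nat.cast_zero, pow_zero] at h0
  rw [← h1, ← binomPow_add hu, neg_add_cancel, h0]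

theorem one_add_mul_derivative_binomPow (α : ℚ) :
    (1 + u) * d⁄dX ℚ (binomPow α u) = α • binomPow α u * d⁄dX ℚ u := by
  have hs := HasSubst.of_constantCoeff_zero' hu
  rw [binomPow_eq_subst _ hu, derivative_subst hs, derivative_binomialSeries, ← mul_assoc]
  congr 1
  rw [subst_smul hs, ← one_add_X_mul_binomialSeries_sub_one α, subst_mul hs, ← coe_substAlgHom hs,
    map_add, map_one, coe_substAlgHom hs, subst_X hs, mul_smul_comm]

end binomPow

theorem X_mul_derivative_X_mul_binomPow (α c : ℚ) {B : ℕ} (hB : B ≠ 0) :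
    X * d⁄dX ℚ (X * binomPow α (C c * X ^ B)) * (1 + C c * X ^ B) =
      X * binomPow α (C c * X ^ B) * (1 + C (c + α * c * B) * X ^ B) := by
  have hu : constantCoeff (C c * X ^ B : ℚ⟦X⟧) = 0 := by simp [hB]
  have hG := one_add_mul_derivative_binomPow hu α
  rw [smul_eq_C_mul] at hG
  rw [Derivation.leibniz, derivative_X, smul_eq_mul, smul_eq_mul, mul_one, map_add, map_mul,
    map_mul, map_natCast]
  linear_combination X * X * hG +
    X * C α * binomPow α (C c * X ^ B) * X_mul_derivative_C_mul_X_pow c B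

/-- Let `q, r, k` be positive integers, `B = q(r-1)+k`, and
`X̂, Ŷ ∈ ℚ⟦z⟧` the parametrising series above.  Then
`z·X̂'(z) = X̂(z)·(1 - (q(r-1)+k)·Ŷ(z)^{r-1}·X̂(z)^{r-1+k})` in `ℚ⟦z⟧`, where `X̂'`
is the formal derivative; equivalently,
`z·X̂'(z)·(1+(k/r)·z^B) = X̂(z)·(1+((k/r)-B)·z^B)`. -/
theorem leaky_logarithmic_derivative
    (q r k : ℕ) (hq : 0 < q) (hr : 0 < r) (hk : 0 < k)
    (B : ℕ) (hB : B = q * (r - 1) + k) :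
    (PowerSeries.X * PowerSeries.derivative ℚ (Xhat q r k) =
      Xhat q r k *
        (1 - PowerSeries.C (R := ℚ) (B : ℚ) * (Yhat q r k) ^ (r - 1) *
            (Xhat q r k) ^ (r - 1 + k))) ∧
    (PowerSeries.X * PowerSeries.derivative ℚ (Xhat q r k) *
        (1 + PowerSeries.C (R := ℚ) ((k : ℚ) / r) * PowerSeries.X ^ B) =
      Xhat q r k *
        (1 + PowerSeries.C (R := ℚ) ((k : ℚ) / r - B) * PowerSeries.X ^ B)) := by
  set u : ℚ⟦X⟧ := C ((k : ℚ) / r) * X ^ B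
  have hB0 : B ≠ 0 := by omega
  have hu : constantCoeff u = 0 := by simp [u, hB0]
  have hX : Xhat q r k = X * binomPow (-(r : ℚ) / k) u := by rw [Xhat, ← hB]
  have hY : Yhat q r k = X ^ (q - 1) * binomPow (((r : ℚ) + k) / k) u := by rw [Yhat, ← hB]
  have leaky : X * d⁄dX ℚ (Xhat q r k) * (1 + u) =
      Xhat q r k * (1 + C ((k : ℚ) / r - B) * X ^ B) := by
    rw [hX, X_mul_derivative_X_mul_binomPow _ _ hB0]
    congr 4
    field_simp
    ring
  have hexp : (q - 1) * (r - 1) + (r - 1 + k) = B := by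
    have : (q - 1) * (r - 1) + (r - 1) = q * (r - 1) := by
      rw [← Nat.succ_mul, Nat.succ_eq_add_one, Nat.sub_add_cancel hq]
    omega
  have hα :
      ((r - 1 : ℕ) : ℚ) * (((r : ℚ) + k) / k) + ((r - 1 + k : ℕ) : ℚ) * (-(r : ℚ) / k) = -1 := by
    push_cast [Nat.cast_sub hr]
    field_simp
    ring
  have hYX : Yhat q r k ^ (r - 1) * Xhat q r k ^ (r - 1 + k) = X ^ B * binomPow (-1) u := by
    rw [hX, hY, mul_pow, mul_pow, ← binomPow_natCast_mul hu, ← binomPow_natCast_mul hu, ← pow_mul,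
      ← hα, binomPow_add hu, ← hexp, pow_add]
    ring
  refine ⟨?_, leaky⟩
  rw [map_sub] at leaky
  linear_combination binomPow (-1) u * leaky + Xhat q r k * C (B : ℚ) * hYX +
    (Xhat q r k - X * d⁄dX ℚ (Xhat q r k)) * binomPow_neg_one_mul_one_add hu
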